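/- Let F, G, H : ℝ → ℝ be continuously differentiable with F, G, H nowhere equal to 1, and let Φ_F, Φ_G, Φ_H, Ψ_F, Ψ_G, Ψ_H : ℝ → ℝ be differentiable functions with Φ_F' = F²/(F−1), Φ_G' = G²/(G−1), Φ_H' = H²/(H−1), Ψ_F' = F/(F−1), Ψ_G' = G/(G−1), Ψ_H' = H/(H−1). Let U ⊆ ℝ³ be open and let a, b, c : U → ℝ be continuously differentiable functions of (x,y,t) such that at every point of U: Φ_F(a) + Φ_G(b) + Φ_H(c) = x, Ψ_F(a) + Ψ_G(b) + Ψ_H(c) = −y, a + b + c = −t, and the values F(a), G(b), H(c) are pairwise distinct. Then the functions R¹ = F(a), R² = G(b), R³ = H(c) satisfy on U the equations (e1): R¹_t = R²R³ R¹_x, R²_t = R¹R³ R²_x, R³_t = R¹R² R³_x, and (e2): R¹_y = (R² + R³ − R²R³) R¹_x, R²_y = (R¹ + R³ − R¹R³) R²_x, R³_y = (R¹ + R² − R¹R²) R³_x. -/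

import Mathlib

/-! Differentiating the three relations gives, at each point and in each coordinate direction,
a linear system for the partial derivatives of `a, b, c` whose rows are
`(F²/(F−1), G²/(G−1), H²/(H−1))`, `(F/(F−1), G/(G−1), H/(H−1))` and `(1, 1, 1)`.
Eliminating `b` and `c` gives `(R¹−R²)(R¹−R³) da = (R¹−1) (dx + (R²+R³) dy + R²R³ (dt − dy))`,
so `a_t = R²R³ a_x` and `a_y = (R²+R³−R²R³) a_x` as soon as `R¹` differs from `R²` and `R³`.
These ratios of partial derivatives are unchanged by composing with `F`, and symmetrically
for `b` and `c`. -/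

/-- Partial derivative of `f : ℝⁿ → ℝ` in the `i`-th coordinate direction. -/
noncomputable def pd {n : ℕ} (i : Fin n) (f : (Fin n → ℝ) → ℝ) (x : Fin n → ℝ) : ℝ :=
  fderiv ℝ f x (Pi.single i 1)

section PartialDerivatives

variable {n : ℕ} {x : Fin n → ℝ}

theorem pd_coord (i j : Fin n) : pd i (fun y => y j) x = (Pi.single i 1 : Fin n → ℝ) j := by
  simp [pd, (hasFDerivAt_apply j x).fderiv]

theorem pd_neg (i : Fin n) (f : (Fin n → ℝ) → ℝ) : pd i (fun y => -f y) x = -pd i f x := by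
  simp [pd]

theorem pd_comp (i : Fin n) {f : ℝ → ℝ} {f' : ℝ} {g : (Fin n → ℝ) → ℝ}
    (hf : HasDerivAt f f' (g x)) (hg : DifferentiableAt ℝ g x) :
    pd i (fun y => f (g y)) x = f' * pd i g x := by
  change fderiv ℝ (f ∘ g) x _ = _
  simp [(hf.comp_hasFDerivAt x hg.hasFDerivAt).fderiv, pd]

theorem pd_comp_eq_mul_of_pd_eq_mul {i j : Fin n} {f : ℝ → ℝ} {g : (Fin n → ℝ) → ℝ} {k : ℝ}
    (hf : DifferentiableAt ℝ f (g x)) (hg : DifferentiableAt ℝ g x)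
    (h : pd i g x = k * pd j g x) :
    pd i (fun y => f (g y)) x = k * pd j (fun y => f (g y)) x := by
  rw [pd_comp i hf.hasDerivAt hg, pd_comp j hf.hasDerivAt hg, h]
  ring

theorem pd_relation_of_eqOn {U : Set (Fin n → ℝ)} (hU : IsOpen U) (hx : x ∈ U) (i : Fin n)
    {Φ₁ Φ₂ Φ₃ : ℝ → ℝ} {φ₁ φ₂ φ₃ : ℝ} {a b c g : (Fin n → ℝ) → ℝ}
    (hΦ₁ : HasDerivAt Φ₁ φ₁ (a x)) (hΦ₂ : HasDerivAt Φ₂ φ₂ (b x)) (hΦ₃ : HasDerivAt Φ₃ φ₃ (c x))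
    (ha : DifferentiableAt ℝ a x) (hb : DifferentiableAt ℝ b x) (hc : DifferentiableAt ℝ c x)
    (hrel : ∀ y ∈ U, Φ₁ (a y) + Φ₂ (b y) + Φ₃ (c y) = g y) :
    φ₁ * pd i a x + φ₂ * pd i b x + φ₃ * pd i c x = pd i g x := by
  have hsum := ((hΦ₁.comp_hasFDerivAt x ha.hasFDerivAt).add
    (hΦ₂.comp_hasFDerivAt x hb.hasFDerivAt)).add (hΦ₃.comp_hasFDerivAt x hc.hasFDerivAt)
  have hg := hsum.congr_of_eventuallyEq
    (Filter.eventually_of_mem (hU.mem_nhds hx) fun y hy => (hrel y hy).symm)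
  simp [pd, hg.fderiv]

end PartialDerivatives

section LinearizedSystem

variable {α β γ : ℝ}

theorem linearized_system_solve_first {A B C δ₀ δ₁ δ₂ : ℝ} (hα : α ≠ 1) (hβ : β ≠ 1) (hγ : γ ≠ 1)
    (h₁ : α ^ 2 / (α - 1) * A + β ^ 2 / (β - 1) * B + γ ^ 2 / (γ - 1) * C = δ₀)
    (h₂ : α / (α - 1) * A + β / (β - 1) * B + γ / (γ - 1) * C = -δ₁)
    (h₃ : A + B + C = -δ₂) :
    (α - β) * (α - γ) * A = (α - 1) * (δ₀ + (β + γ) * δ₁ + β * γ * (δ₂ - δ₁)) := by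
  have hα' : α - 1 ≠ 0 := sub_ne_zero.mpr hα
  have hβ' : β - 1 ≠ 0 := sub_ne_zero.mpr hβ
  have hγ' : γ - 1 ≠ 0 := sub_ne_zero.mpr hγ
  field_simp at h₁ h₂
  refine mul_left_cancel₀ (mul_ne_zero hβ' hγ') ?_
  linear_combination h₁ + (β * γ - β - γ) * h₂ - β * γ * ((α - 1) * (β - 1) * (γ - 1)) * h₃

variable {A B C : Fin 3 → ℝ} (hα : α ≠ 1) (hβ : β ≠ 1) (hγ : γ ≠ 1)
  (h₁ : ∀ i, α ^ 2 / (α - 1) * A i + β ^ 2 / (β - 1) * B i + γ ^ 2 / (γ - 1) * C i =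
    (Pi.single i 1 : Fin 3 → ℝ) 0)
  (h₂ : ∀ i, α / (α - 1) * A i + β / (β - 1) * B i + γ / (γ - 1) * C i =
    -(Pi.single i 1 : Fin 3 → ℝ) 1)
  (h₃ : ∀ i, A i + B i + C i = -(Pi.single i 1 : Fin 3 → ℝ) 2)
include hα hβ hγ h₁ h₂ h₃

theorem linearized_system_ratios_first (hαβ : α ≠ β) (hαγ : α ≠ γ) :
    A 2 = β * γ * A 0 ∧ A 1 = (β + γ - β * γ) * A 0 := by
  have hsolve i := linearized_system_solve_first hα hβ hγ (h₁ i) (h₂ i) (h₃ i)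
  have hx := hsolve 0
  have hy := hsolve 1
  have ht := hsolve 2
  simp only [Pi.single_apply, Fin.isValue, Fin.reduceEq, if_true, if_false] at hx hy ht
  have hne : (α - β) * (α - γ) ≠ 0 := mul_ne_zero (sub_ne_zero.mpr hαβ) (sub_ne_zero.mpr hαγ)
  constructor <;> refine mul_left_cancel₀ hne ?_
  · linear_combination ht - β * γ * hx
  · linear_combination hy - (β + γ - β * γ) * hx

theorem linearized_system_ratios (hαβ : α ≠ β) (hαγ : α ≠ γ) (hβγ : β ≠ γ) :
    (A 2 = β * γ * A 0 ∧ A 1 = (β + γ - β * γ) * A 0) ∧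
    (B 2 = α * γ * B 0 ∧ B 1 = (α + γ - α * γ) * B 0) ∧
    (C 2 = α * β * C 0 ∧ C 1 = (α + β - α * β) * C 0) :=
  ⟨linearized_system_ratios_first hα hβ hγ h₁ h₂ h₃ hαβ hαγ,
    linearized_system_ratios_first (α := β) (β := α) (A := B) (B := A) (C := C) hβ hα hγ
      (fun i => by linear_combination h₁ i) (fun i => by linear_combination h₂ i)
      (fun i => by linear_combination h₃ i) hαβ.symm hβγ,
    linearized_system_ratios_first (α := γ) (β := α) (γ := β) (A := C) (B := A) (C := B) hγ hα hβ
      (fun i => by linear_combination h₁ i) (fun i => by linear_combination h₂ i)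
      (fun i => by linear_combination h₃ i) hαγ.symm hβγ.symm⟩

end LinearizedSystem

/-- Coordinates on ℝ³ are `(x,y,t)` with indices `(0,1,2)`.
Given C¹ functions `F, G, H` nowhere equal to 1, primitives `Φ_F, …, Ψ_H` of
`F²/(F−1), …, H/(H−1)`, and C¹ functions `a, b, c` on an open set `U` satisfying the
implicit relations `Φ_F(a)+Φ_G(b)+Φ_H(c) = x`, `Ψ_F(a)+Ψ_G(b)+Ψ_H(c) = −y`,
`a+b+c = −t` with `F(a), G(b), H(c)` pairwise distinct, the functions
`R¹ = F(a)`, `R² = G(b)`, `R³ = H(c)` satisfy the systems (e1) and (e2) on `U`. -/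
theorem stmt14 (F G H ΦF ΦG ΦH ΨF ΨG ΨH : ℝ → ℝ)
    (hF : ContDiff ℝ 1 F) (hG : ContDiff ℝ 1 G) (hH : ContDiff ℝ 1 H)
    (hF1 : ∀ s, F s ≠ 1) (hG1 : ∀ s, G s ≠ 1) (hH1 : ∀ s, H s ≠ 1)
    (hΦF : ∀ s, HasDerivAt ΦF ((F s) ^ 2 / (F s - 1)) s)
    (hΦG : ∀ s, HasDerivAt ΦG ((G s) ^ 2 / (G s - 1)) s)
    (hΦH : ∀ s, HasDerivAt ΦH ((H s) ^ 2 / (H s - 1)) s)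
    (hΨF : ∀ s, HasDerivAt ΨF (F s / (F s - 1)) s)
    (hΨG : ∀ s, HasDerivAt ΨG (G s / (G s - 1)) s)
    (hΨH : ∀ s, HasDerivAt ΨH (H s / (H s - 1)) s)
    (U : Set (Fin 3 → ℝ)) (hU : IsOpen U)
    (a b c : (Fin 3 → ℝ) → ℝ)
    (ha : ContDiffOn ℝ 1 a U) (hb : ContDiffOn ℝ 1 b U) (hc : ContDiffOn ℝ 1 c U)
    (heq1 : ∀ x ∈ U, ΦF (a x) + ΦG (b x) + ΦH (c x) = x 0)
    (heq2 : ∀ x ∈ U, ΨF (a x) + ΨG (b x) + ΨH (c x) = -(x 1))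
    (heq3 : ∀ x ∈ U, a x + b x + c x = -(x 2))
    (hdist : ∀ x ∈ U, F (a x) ≠ G (b x) ∧ F (a x) ≠ H (c x) ∧ G (b x) ≠ H (c x)) :
    (∀ x ∈ U,
      pd 2 (fun y => F (a y)) x = G (b x) * H (c x) * pd 0 (fun y => F (a y)) x ∧
      pd 2 (fun y => G (b y)) x = F (a x) * H (c x) * pd 0 (fun y => G (b y)) x ∧
      pd 2 (fun y => H (c y)) x = F (a x) * G (b x) * pd 0 (fun y => H (c y)) x) ∧
    (∀ x ∈ U,
      pd 1 (fun y => F (a y)) x =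
        (G (b x) + H (c x) - G (b x) * H (c x)) * pd 0 (fun y => F (a y)) x ∧
      pd 1 (fun y => G (b y)) x =
        (F (a x) + H (c x) - F (a x) * H (c x)) * pd 0 (fun y => G (b y)) x ∧
      pd 1 (fun y => H (c y)) x =
        (F (a x) + G (b x) - F (a x) * G (b x)) * pd 0 (fun y => H (c y)) x) := by
  have hdiff {f : (Fin 3 → ℝ) → ℝ} (hf : ContDiffOn ℝ 1 f U) (x : Fin 3 → ℝ) (hx : x ∈ U) :
      DifferentiableAt ℝ f x :=
    (hf.contDiffAt (hU.mem_nhds hx)).differentiableAt one_ne_zero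
  have hratios x (hx : x ∈ U) := by
    obtain ⟨hFG, hFH, hGH⟩ := hdist x hx
    have hda := hdiff ha x hx
    have hdb := hdiff hb x hx
    have hdc := hdiff hc x hx
    have hdx i := pd_relation_of_eqOn hU hx i (hΦF _) (hΦG _) (hΦH _) hda hdb hdc heq1
    have hdy i := pd_relation_of_eqOn hU hx i (hΨF _) (hΨG _) (hΨH _) hda hdb hdc heq2
    have hdt i := pd_relation_of_eqOn hU hx i (hasDerivAt_id _) (hasDerivAt_id _)
      (hasDerivAt_id _) hda hdb hdc heq3
    simp only [pd_coord, pd_neg, one_mul] at hdx hdy hdt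
    exact linearized_system_ratios (hF1 _) (hG1 _) (hH1 _) hdx hdy hdt hFG hFH hGH
  have hdF := hF.differentiable one_ne_zero
  have hdG := hG.differentiable one_ne_zero
  have hdH := hH.differentiable one_ne_zero
  refine ⟨fun x hx => ⟨?_, ?_, ?_⟩, fun x hx => ⟨?_, ?_, ?_⟩⟩
  · exact pd_comp_eq_mul_of_pd_eq_mul (hdF _) (hdiff ha x hx) (hratios x hx).1.1
  · exact pd_comp_eq_mul_of_pd_eq_mul (hdG _) (hdiff hb x hx) (hratios x hx).2.1.1
  · exact pd_comp_eq_mul_of_pd_eq_mul (hdH _) (hdiff hc x hx) (hratios x hx).2.2.1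
  · exact pd_comp_eq_mul_of_pd_eq_mul (hdF _) (hdiff ha x hx) (hratios x hx).1.2
  · exact pd_comp_eq_mul_of_pd_eq_mul (hdG _) (hdiff hb x hx) (hratios x hx).2.1.2
  · exact pd_comp_eq_mul_of_pd_eq_mul (hdH _) (hdiff hc x hx) (hratios x hx).2.2.2
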